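/- Let δ ∈ (0, 1/2] and let B be a symmetric real d×d matrix. Then trace(B − g_δ(B)) ≥ (1/(2δ)) |[B]_−|, where [B]_− is the matrix obtained by applying the negative part function s ↦ min(s, 0) to the spectrum of B, and |·| is the Frobenius norm. -/

import Mathlib

/-! Everything diagonalises in the eigenbasis of `B`: the trace becomes `∑ᵢ (λᵢ - g_δ(λᵢ))` and
`|[B]₋|` is the ℓ² norm of the negative parts of the eigenvalues, which is at most their ℓ¹ norm.
The claim thus reduces to the scalar inequality `-min(s, 0) / (2δ) ≤ s - g_δ(s)`. -/

open Matrix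

/-- The Frobenius norm of a real matrix. -/
noncomputable def frobNorm {d : ℕ} (A : Matrix (Fin d) (Fin d) ℝ) : ℝ :=
  Real.sqrt (∑ i, ∑ j, (A i j) ^ 2)

/-- The matrix obtained by applying a scalar function `F : ℝ → ℝ` to the spectrum of a
symmetric (Hermitian) real matrix `B`. -/
noncomputable def specApply {d : ℕ} (F : ℝ → ℝ) {B : Matrix (Fin d) (Fin d) ℝ}
    (hB : B.IsHermitian) : Matrix (Fin d) (Fin d) ℝ :=
  (hB.eigenvectorUnitary : Matrix (Fin d) (Fin d) ℝ) *
    Matrix.diagonal (fun i => F (hB.eigenvalues i)) *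
    star (hB.eigenvectorUnitary : Matrix (Fin d) (Fin d) ℝ)

/-- The regularised logarithm `g_δ`. -/
noncomputable def gReg (δ : ℝ) (s : ℝ) : ℝ :=
  if s < δ then s / δ + Real.log δ - 1 else Real.log s

section SpecApply

variable {d : ℕ} {B : Matrix (Fin d) (Fin d) ℝ} (hB : B.IsHermitian)

lemma trace_specApply (F : ℝ → ℝ) : (specApply F hB).trace = ∑ i, F (hB.eigenvalues i) := by
  rw [specApply, trace_mul_cycle, Matrix.UnitaryGroup.star_mul_self, one_mul, trace_diagonal]

lemma specApply_mul_specApply (F G : ℝ → ℝ) :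
    specApply F hB * specApply G hB = specApply (fun s => F s * G s) hB := by
  simp only [specApply, mul_assoc, ← mul_assoc (star _) _, Matrix.UnitaryGroup.star_mul_self,
    one_mul]
  rw [← mul_assoc (diagonal _), diagonal_mul_diagonal]

lemma isHermitian_specApply (F : ℝ → ℝ) : (specApply F hB).IsHermitian :=
  isHermitian_mul_mul_conjTranspose _ (isHermitian_diagonal _)

lemma frobNorm_specApply (F : ℝ → ℝ) :
    frobNorm (specApply F hB) = √(∑ i, F (hB.eigenvalues i) ^ 2) := by
  have hsym : (specApply F hB)ᵀ = specApply F hB := by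
    simpa using (isHermitian_specApply hB F).eq
  calc frobNorm (specApply F hB)
      = √((specApply F hB)ᵀ * specApply F hB).trace := by
        simp only [frobNorm, trace, diag_apply, mul_apply, transpose_apply, sq]
        rw [Finset.sum_comm]
    _ = √(∑ i, F (hB.eigenvalues i) ^ 2) := by
        simp only [hsym, specApply_mul_specApply, trace_specApply, sq]

lemma trace_sub_specApply (F : ℝ → ℝ) :
    (B - specApply F hB).trace = ∑ i, (hB.eigenvalues i - F (hB.eigenvalues i)) := by
  rw [trace_sub, hB.trace_eq_sum_eigenvalues, trace_specApply, Finset.sum_sub_distrib]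
  simp

end SpecApply

lemma Real.sqrt_sum_sq_le_sum {ι : Type*} (s : Finset ι) {f : ι → ℝ} (hf : ∀ i ∈ s, 0 ≤ f i) :
    √(∑ i ∈ s, f i ^ 2) ≤ ∑ i ∈ s, f i :=
  (Real.sqrt_le_left (Finset.sum_nonneg hf)).mpr (Finset.sum_sq_le_sq_sum_of_nonneg hf)

lemma gReg_le_self {δ s : ℝ} (hδ0 : 0 < δ) (hδ1 : δ ≤ 1) (hs : 0 ≤ s) : gReg δ s ≤ s := by
  have hlog : Real.log δ ≤ 0 := Real.log_nonpos hδ0.le hδ1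
  unfold gReg
  split_ifs with h
  · linarith [(div_lt_one hδ0).mpr h]
  · linarith [Real.log_le_sub_one_of_pos (hδ0.trans_le (not_lt.mp h))]

/-- For `s < 0` this is `(1 - 1/(2δ)) s + 1 - log δ ≥ 0`, which needs `δ ≤ 1/2`. -/
lemma neg_min_zero_div_le_sub_gReg {δ s : ℝ} (hδ0 : 0 < δ) (hδ2 : δ ≤ 1 / 2) :
    1 / (2 * δ) * -min s 0 ≤ s - gReg δ s := by
  rcases le_or_gt 0 s with hs | hs
  · rw [min_eq_right hs, neg_zero, mul_zero, sub_nonneg]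
    exact gReg_le_self hδ0 (by linarith) hs
  · have hlog : Real.log δ ≤ 0 := Real.log_nonpos hδ0.le (by linarith)
    rw [min_eq_left hs.le, gReg, if_pos (hs.trans hδ0)]
    have key : 0 ≤ -s * (1 - 2 * δ) := mul_nonneg (by linarith) (by linarith)
    field_simp
    nlinarith

theorem trace_sub_gReg_ge_negPart_general {d : ℕ} (δ : ℝ)
    (hδ : δ ∈ Set.Ioc (0:ℝ) (1/2)) (B : Matrix (Fin d) (Fin d) ℝ) (hB : B.IsHermitian) :
    (1 / (2 * δ)) * frobNorm (specApply (fun s => min s 0) hB) ≤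
      (B - specApply (gReg δ) hB).trace := by
  obtain ⟨hδ0, hδ2⟩ := hδ
  have hnorm : frobNorm (specApply (fun s => min s 0) hB) ≤ ∑ i, -min (hB.eigenvalues i) 0 := by
    rw [frobNorm_specApply]
    simp_rw [← neg_sq (min _ (0 : ℝ))]
    exact Real.sqrt_sum_sq_le_sum _ fun i _ => neg_nonneg.mpr (min_le_right _ _)
  calc 1 / (2 * δ) * frobNorm (specApply (fun s => min s 0) hB)
      ≤ 1 / (2 * δ) * ∑ i, -min (hB.eigenvalues i) 0 := by gcongr
    _ = ∑ i, 1 / (2 * δ) * -min (hB.eigenvalues i) 0 := Finset.mul_sum _ _ _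
    _ ≤ ∑ i, (hB.eigenvalues i - gReg δ (hB.eigenvalues i)) :=
        Finset.sum_le_sum fun i _ => neg_min_zero_div_le_sub_gReg hδ0 hδ2
    _ = (B - specApply (gReg δ) hB).trace := (trace_sub_specApply hB _).symm

/-- For `δ ∈ (0, 1/2]` and a symmetric real `d × d` matrix `B`,
`trace (B - g_δ(B)) ≥ (1/(2δ)) |[B]₋|`, where `[B]₋` is obtained by applying `s ↦ min s 0`
to the spectrum of `B` and `|·|` is the Frobenius norm. -/
theorem trace_sub_gReg_ge_negPart {d : ℕ} (hd : 0 < d) (δ : ℝ)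
    (hδ : δ ∈ Set.Ioc (0:ℝ) (1/2)) (B : Matrix (Fin d) (Fin d) ℝ) (hB : B.IsHermitian) :
    (1 / (2 * δ)) * frobNorm (specApply (fun s => min s 0) hB) ≤
      (B - specApply (gReg δ) hB).trace :=
  trace_sub_gReg_ge_negPart_general δ hδ B hB
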